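/- Let r ≥ 1 be an edge-admissible integer and let C ∈ 𝕜 be a nonzero root of the edge polynomial P_r such that P_r′(C) ≠ 0 and, if ∂ ∈ T_r, also P_r′(C) + m ≠ 0 for every integer m ≥ 1. Then there exists a unique formal power series y ∈ 𝕜⟦X⟧ with constant coefficient C satisfying the power-series equation E_r(y): X^{(r+1)−O_r}·(r·y + X·y′) + Σ_{i=1}^{3} X^{Φ_i(r)−O_r}·rev(A_i)·y^{n_i} = 0; equivalently, there is a unique formal Laurent series solution x(t) = Σ_{m≥0} c_m·t^{−r−m} of the generalized Abel equation with c_0 = C. -/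

import Mathlib

open Polynomial

/-- Index set `{3, 2, 1, ∂}` for the terms of the generalized Abel equation. -/
inductive AbelIdx : Type
  | I1 : AbelIdx
  | I2 : AbelIdx
  | I3 : AbelIdx
  | D  : AbelIdx
  deriving DecidableEq

instance instFintypeAbelIdx : Fintype AbelIdx :=
  ⟨{AbelIdx.I1, AbelIdx.I2, AbelIdx.I3, AbelIdx.D}, by intro x; cases x <;> simp⟩

/-- `p` is a solution denominator: `p ≠ 0` and
`p^(n3-2)·p' + A3 + A2·p^(n3-n2) + A1·p^(n3-n1) = 0`, i.e. `x = 1/p` solves the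
generalized Abel equation `x' = A3 x^{n3} + A2 x^{n2} + A1 x^{n1}`. -/
def IsSolDen {𝕜 : Type*} [Field 𝕜] (n1 n2 n3 : ℕ) (A1 A2 A3 : Polynomial 𝕜)
    (p : Polynomial 𝕜) : Prop :=
  p ≠ 0 ∧
    p ^ (n3 - 2) * Polynomial.derivative p + A3 + A2 * p ^ (n3 - n2) + A1 * p ^ (n3 - n1) = 0

/-- `Φ_ℓ(r)` for `ℓ ∈ {1,2,3,∂}`. -/
def Phi (n1 n2 n3 a1 a2 a3 r : ℕ) : AbelIdx → ℤ
  | .I1 => (n1 : ℤ) * r - a1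
  | .I2 => (n2 : ℤ) * r - a2
  | .I3 => (n3 : ℤ) * r - a3
  | .D  => (r : ℤ) + 1

/-- `O_r`, the minimum of the four `Φ_ℓ(r)`. -/
def Omin (n1 n2 n3 a1 a2 a3 r : ℕ) : ℤ :=
  min (min (Phi n1 n2 n3 a1 a2 a3 r .I1) (Phi n1 n2 n3 a1 a2 a3 r .I2))
      (min (Phi n1 n2 n3 a1 a2 a3 r .I3) (Phi n1 n2 n3 a1 a2 a3 r .D))

/-- `T_r = {ℓ : Φ_ℓ(r) = O_r}`. -/
def Tie (n1 n2 n3 a1 a2 a3 r : ℕ) : Finset AbelIdx :=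
  Finset.univ.filter fun ℓ => Phi n1 n2 n3 a1 a2 a3 r ℓ = Omin n1 n2 n3 a1 a2 a3 r

/-- `r` is edge-admissible if `T_r` has at least two elements. -/
def EdgeAdmissible (n1 n2 n3 a1 a2 a3 r : ℕ) : Prop :=
  2 ≤ (Tie n1 n2 n3 a1 a2 a3 r).card

/-- The edge polynomial `P_r(C)`. -/
noncomputable def edgePoly {𝕜 : Type*} [Field 𝕜] (n1 n2 n3 : ℕ)
    (A1 A2 A3 : Polynomial 𝕜) (r : ℕ) : Polynomial 𝕜 :=
  (if AbelIdx.I1 ∈ Tie n1 n2 n3 A1.natDegree A2.natDegree A3.natDegree r then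
      Polynomial.C A1.leadingCoeff * Polynomial.X ^ n1 else 0) +
  (if AbelIdx.I2 ∈ Tie n1 n2 n3 A1.natDegree A2.natDegree A3.natDegree r then
      Polynomial.C A2.leadingCoeff * Polynomial.X ^ n2 else 0) +
  (if AbelIdx.I3 ∈ Tie n1 n2 n3 A1.natDegree A2.natDegree A3.natDegree r then
      Polynomial.C A3.leadingCoeff * Polynomial.X ^ n3 else 0) +
  (if AbelIdx.D ∈ Tie n1 n2 n3 A1.natDegree A2.natDegree A3.natDegree r then
      (r : Polynomial 𝕜) * Polynomial.X else 0)

/-- The set `Γ` of candidate denominator degrees. -/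
def Gamma (n1 n2 n3 a1 a2 a3 : ℕ) : Set ℕ :=
  {r | 0 < r ∧ ((n3 : ℤ) - n2) * r ≤ (a3 : ℤ) ∧
    (((n3 : ℤ) - n2) * r = (a3 : ℤ) - a2 ∨
     ((n3 : ℤ) - n1) * r = (a3 : ℤ) - a1 ∨
     ((n2 : ℤ) - n1) * r = (a2 : ℤ) - a1 ∨
     ((n3 : ℤ) - 1) * r = (a3 : ℤ) + 1 ∨
     ((n2 : ℤ) - 1) * r = (a2 : ℤ) + 1 ∨
     ((n1 : ℤ) - 1) * r = (a1 : ℤ) + 1)}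

/-- The nondegeneracy hypothesis (ND). -/
def ND {𝕜 : Type*} [Field 𝕜] (n1 n2 n3 : ℕ) (A1 A2 A3 : Polynomial 𝕜) : Prop :=
  ∀ r : ℕ, r ∈ Gamma n1 n2 n3 A1.natDegree A2.natDegree A3.natDegree →
    EdgeAdmissible n1 n2 n3 A1.natDegree A2.natDegree A3.natDegree r →
    ((∀ c : 𝕜, c ≠ 0 → (edgePoly n1 n2 n3 A1 A2 A3 r).IsRoot c →
        (Polynomial.derivative (edgePoly n1 n2 n3 A1 A2 A3 r)).eval c ≠ 0) ∧
     (AbelIdx.D ∈ Tie n1 n2 n3 A1.natDegree A2.natDegree A3.natDegree r →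
        ∀ c : 𝕜, c ≠ 0 → (edgePoly n1 n2 n3 A1 A2 A3 r).IsRoot c →
          ∀ m : ℕ, 1 ≤ m →
            (Polynomial.derivative (edgePoly n1 n2 n3 A1 A2 A3 r)).eval c + (m : 𝕜) ≠ 0) ∧
     (¬ ∃ c1 c2 ζ : 𝕜, c1 ≠ 0 ∧ c2 ≠ 0 ∧
        (edgePoly n1 n2 n3 A1 A2 A3 r).IsRoot c1 ∧
        (edgePoly n1 n2 n3 A1 A2 A3 r).IsRoot c2 ∧
        ζ ≠ 1 ∧ c1 = ζ * c2 ∧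
        (ζ ^ (n3 - n2) = 1 ∨ ζ ^ (n3 - n1) = 1 ∨ ζ ^ (n3 - 1) = 1)))

/-- The power-series form `E_r(y)` of the generalized Abel equation at infinity. -/
noncomputable def abelPS {𝕜 : Type*} [Field 𝕜] (n1 n2 n3 : ℕ)
    (A1 A2 A3 : Polynomial 𝕜) (r : ℕ) (y : PowerSeries 𝕜) : PowerSeries 𝕜 :=
  PowerSeries.X ^ (((r : ℤ) + 1 - Omin n1 n2 n3 A1.natDegree A2.natDegree A3.natDegree r).toNat) *
      ((r : PowerSeries 𝕜) * y + PowerSeries.X * PowerSeries.derivativeFun y) +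
  PowerSeries.X ^ ((Phi n1 n2 n3 A1.natDegree A2.natDegree A3.natDegree r AbelIdx.I1 -
      Omin n1 n2 n3 A1.natDegree A2.natDegree A3.natDegree r).toNat) *
      (A1.reverse : PowerSeries 𝕜) * y ^ n1 +
  PowerSeries.X ^ ((Phi n1 n2 n3 A1.natDegree A2.natDegree A3.natDegree r AbelIdx.I2 -
      Omin n1 n2 n3 A1.natDegree A2.natDegree A3.natDegree r).toNat) *
      (A2.reverse : PowerSeries 𝕜) * y ^ n2 +
  PowerSeries.X ^ ((Phi n1 n2 n3 A1.natDegree A2.natDegree A3.natDegree r AbelIdx.I3 -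
      Omin n1 n2 n3 A1.natDegree A2.natDegree A3.natDegree r).toNat) *
      (A3.reverse : PowerSeries 𝕜) * y ^ n3

namespace Stmt4Aux

open PowerSeries

variable {𝕜 : Type*} [Field 𝕜]

lemma coeff_mul_low (w s : PowerSeries 𝕜) (m : ℕ)
    (h : ∀ j < m, PowerSeries.coeff j w = 0) :
    PowerSeries.coeff m (w * s) = PowerSeries.coeff m w * constantCoeff s := by
  rw [PowerSeries.coeff_mul, Finset.sum_eq_single (m, 0)]
  · rw [coeff_zero_eq_constantCoeff_apply]
  · rintro ⟨a, b⟩ hab hne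
    have hab' : a + b = m := Finset.HasAntidiagonal.mem_antidiagonal.mp hab
    have ha : a < m := by
      rcases Nat.lt_or_ge a m with h' | h'
      · exact h'
      · exfalso
        have ha' : a = m := by omega
        have hb' : b = 0 := by omega
        exact hne (by rw [ha', hb'])
    rw [h a ha, zero_mul]
  · intro hmem
    exact absurd (Finset.HasAntidiagonal.mem_antidiagonal.mpr (add_zero m)) hmem

lemma eqUpTo_mul {u u' v v' : PowerSeries 𝕜} {m : ℕ}
    (hu : ∀ j < m, PowerSeries.coeff j u = PowerSeries.coeff j u')
    (hv : ∀ j < m, PowerSeries.coeff j v = PowerSeries.coeff j v') :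
    ∀ j < m, PowerSeries.coeff j (u * v) = PowerSeries.coeff j (u' * v') := by
  intro j hj
  rw [PowerSeries.coeff_mul, PowerSeries.coeff_mul]
  refine Finset.sum_congr rfl fun ab hab => ?_
  have h' : ab.1 + ab.2 = j := Finset.HasAntidiagonal.mem_antidiagonal.mp hab
  rw [hu ab.1 (by omega), hv ab.2 (by omega)]

lemma eqUpTo_pow {u v : PowerSeries 𝕜} {m : ℕ}
    (h : ∀ j < m, PowerSeries.coeff j u = PowerSeries.coeff j v) (n : ℕ) :
    ∀ j < m, PowerSeries.coeff j (u ^ n) = PowerSeries.coeff j (v ^ n) := by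
  induction n with
  | zero => intro j hj; rfl
  | succ n ih =>
    intro j hj
    rw [pow_succ, pow_succ]
    exact eqUpTo_mul ih h j hj

lemma coeff_mul_sub (B u v : PowerSeries 𝕜) (m : ℕ)
    (h : ∀ j < m, PowerSeries.coeff j u = PowerSeries.coeff j v) :
    PowerSeries.coeff m (B * u) - PowerSeries.coeff m (B * v)
      = (PowerSeries.coeff m u - PowerSeries.coeff m v) * constantCoeff B := by
  have key : B * u - B * v = (u - v) * B := by ring
  calc PowerSeries.coeff m (B * u) - PowerSeries.coeff m (B * v)
      = PowerSeries.coeff m (B * u - B * v) := (map_sub _ _ _).symm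
    _ = PowerSeries.coeff m ((u - v) * B) := by rw [key]
    _ = PowerSeries.coeff m (u - v) * constantCoeff B :=
        coeff_mul_low _ _ m (fun j hj => by rw [map_sub, h j hj, sub_self])
    _ = (PowerSeries.coeff m u - PowerSeries.coeff m v) * constantCoeff B := by rw [map_sub]

lemma coeff_pow_sub (y z : PowerSeries 𝕜) (C : 𝕜) (m n : ℕ)
    (h0y : constantCoeff y = C) (h0z : constantCoeff z = C)
    (h : ∀ j < m, PowerSeries.coeff j y = PowerSeries.coeff j z) :
    PowerSeries.coeff m (y ^ n) - PowerSeries.coeff m (z ^ n)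
      = (n : 𝕜) * C ^ (n - 1) * (PowerSeries.coeff m y - PowerSeries.coeff m z) := by
  rcases Nat.eq_zero_or_pos n with rfl | hn
  · simp
  have key : y ^ n - z ^ n = (y - z) * ∑ i ∈ Finset.range n, y ^ i * z ^ (n - 1 - i) := by
    rw [mul_comm]; exact (geom_sum₂_mul y z n).symm
  have hw : ∀ j < m, PowerSeries.coeff j (y - z) = 0 := fun j hj => by
    rw [map_sub, h j hj, sub_self]
  have hS : constantCoeff (∑ i ∈ Finset.range n, y ^ i * z ^ (n - 1 - i))
      = (n : 𝕜) * C ^ (n - 1) := by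
    rw [map_sum]
    rw [Finset.sum_congr rfl (fun i hi => ?_), Finset.sum_const, Finset.card_range,
      nsmul_eq_mul]
    have hi' : i < n := Finset.mem_range.mp hi
    rw [map_mul, map_pow, map_pow, h0y, h0z, ← pow_add]
    congr 1
    omega
  calc PowerSeries.coeff m (y ^ n) - PowerSeries.coeff m (z ^ n)
      = PowerSeries.coeff m (y ^ n - z ^ n) := (map_sub _ _ _).symm
    _ = PowerSeries.coeff m ((y - z) * ∑ i ∈ Finset.range n, y ^ i * z ^ (n - 1 - i)) := by rw [key]
    _ = PowerSeries.coeff m (y - z) * ((n : 𝕜) * C ^ (n - 1)) := by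
        rw [coeff_mul_low _ _ m hw, hS]
    _ = (n : 𝕜) * C ^ (n - 1) * (PowerSeries.coeff m y - PowerSeries.coeff m z) := by
        rw [map_sub]; ring

lemma coeff_Xpow_mul_sub (e m : ℕ) (w w' : PowerSeries 𝕜)
    (hlow : ∀ j < m, PowerSeries.coeff j w = PowerSeries.coeff j w') :
    PowerSeries.coeff m (PowerSeries.X ^ e * w) - PowerSeries.coeff m (PowerSeries.X ^ e * w')
      = if e = 0 then PowerSeries.coeff m w - PowerSeries.coeff m w' else 0 := by
  rw [PowerSeries.coeff_X_pow_mul', PowerSeries.coeff_X_pow_mul']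
  rcases eq_or_ne e 0 with rfl | he
  · simp
  · rw [if_neg he]
    split_ifs with hle
    · rw [hlow (m - e) (by omega), sub_self]
    · simp

lemma coeff_zero_Xpow_mul (e : ℕ) (w : PowerSeries 𝕜) :
    PowerSeries.coeff 0 (PowerSeries.X ^ e * w) = if e = 0 then constantCoeff w else 0 := by
  rw [PowerSeries.coeff_X_pow_mul']
  rcases eq_or_ne e 0 with rfl | he
  · simp [coeff_zero_eq_constantCoeff_apply]
  · rw [if_neg (by omega), if_neg he]

lemma coeff_lin (r k : ℕ) (y : PowerSeries 𝕜) :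
    PowerSeries.coeff k ((r : PowerSeries 𝕜) * y + PowerSeries.X * derivativeFun y)
      = ((r : 𝕜) + k) * PowerSeries.coeff k y := by
  have hr : (r : PowerSeries 𝕜) = PowerSeries.C (r : 𝕜) := by
    rw [← map_natCast (PowerSeries.C (R := 𝕜)) r]
  have hX : (PowerSeries.X : PowerSeries 𝕜) = PowerSeries.X ^ 1 := (pow_one _).symm
  rw [map_add, hr, PowerSeries.coeff_C_mul, hX, PowerSeries.coeff_X_pow_mul']
  rcases Nat.eq_zero_or_pos k with rfl | hk
  · simp
  · rw [if_pos (show 1 ≤ k from hk),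
      show derivativeFun y = PowerSeries.derivative 𝕜 y from rfl, PowerSeries.coeff_derivative]
    have hk1 : k - 1 + 1 = k := Nat.succ_pred_eq_of_pos hk
    have hc : ((k - 1 : ℕ) : 𝕜) + 1 = (k : 𝕜) := by
      exact_mod_cast congrArg (Nat.cast (R := 𝕜)) hk1
    rw [hk1, hc]
    ring

lemma constantCoeff_reverse (A : Polynomial 𝕜) :
    constantCoeff (A.reverse : PowerSeries 𝕜) = A.leadingCoeff := by
  rw [Polynomial.constantCoeff_coe, Polynomial.coeff_reverse, Polynomial.revAt_zero,
    Polynomial.coeff_natDegree]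

lemma omin_le (n1 n2 n3 a1 a2 a3 r : ℕ) (ℓ : AbelIdx) :
    Omin n1 n2 n3 a1 a2 a3 r ≤ Phi n1 n2 n3 a1 a2 a3 r ℓ := by
  cases ℓ <;> simp only [Omin, Phi] <;> omega

lemma toNat_eq_zero_iff_mem (n1 n2 n3 a1 a2 a3 r : ℕ) (ℓ : AbelIdx) :
    ((Phi n1 n2 n3 a1 a2 a3 r ℓ - Omin n1 n2 n3 a1 a2 a3 r).toNat = 0)
      ↔ ℓ ∈ Tie n1 n2 n3 a1 a2 a3 r := by
  have := omin_le n1 n2 n3 a1 a2 a3 r ℓ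
  rw [Tie, Finset.mem_filter]
  simp only [Finset.mem_univ, true_and]
  omega

end Stmt4Aux

namespace Stmt4Aux2

open PowerSeries Stmt4Aux

variable {𝕜 : Type*} [Field 𝕜]

lemma eval_edgePoly (n1 n2 n3 : ℕ) (A1 A2 A3 : Polynomial 𝕜) (r : ℕ) (C : 𝕜) :
    (edgePoly n1 n2 n3 A1 A2 A3 r).eval C
      = (if AbelIdx.I1 ∈ Tie n1 n2 n3 A1.natDegree A2.natDegree A3.natDegree r then
            A1.leadingCoeff * C ^ n1 else 0)
      + (if AbelIdx.I2 ∈ Tie n1 n2 n3 A1.natDegree A2.natDegree A3.natDegree r then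
            A2.leadingCoeff * C ^ n2 else 0)
      + (if AbelIdx.I3 ∈ Tie n1 n2 n3 A1.natDegree A2.natDegree A3.natDegree r then
            A3.leadingCoeff * C ^ n3 else 0)
      + (if AbelIdx.D ∈ Tie n1 n2 n3 A1.natDegree A2.natDegree A3.natDegree r then
            (r : 𝕜) * C else 0) := by
  simp [edgePoly, apply_ite (Polynomial.eval C)]

lemma eval_derivative_edgePoly (n1 n2 n3 : ℕ) (A1 A2 A3 : Polynomial 𝕜) (r : ℕ) (C : 𝕜) :
    (Polynomial.derivative (edgePoly n1 n2 n3 A1 A2 A3 r)).eval C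
      = (if AbelIdx.I1 ∈ Tie n1 n2 n3 A1.natDegree A2.natDegree A3.natDegree r then
            A1.leadingCoeff * (n1 : 𝕜) * C ^ (n1 - 1) else 0)
      + (if AbelIdx.I2 ∈ Tie n1 n2 n3 A1.natDegree A2.natDegree A3.natDegree r then
            A2.leadingCoeff * (n2 : 𝕜) * C ^ (n2 - 1) else 0)
      + (if AbelIdx.I3 ∈ Tie n1 n2 n3 A1.natDegree A2.natDegree A3.natDegree r then
            A3.leadingCoeff * (n3 : 𝕜) * C ^ (n3 - 1) else 0)
      + (if AbelIdx.D ∈ Tie n1 n2 n3 A1.natDegree A2.natDegree A3.natDegree r then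
            (r : 𝕜) else 0) := by
  have hr : Polynomial.derivative ((r : Polynomial 𝕜) * Polynomial.X)
      = (r : Polynomial 𝕜) := by
    rw [← Polynomial.C_eq_natCast, Polynomial.derivative_C_mul, Polynomial.derivative_X,
      mul_one]
  simp [edgePoly, apply_ite Polynomial.derivative, apply_ite (Polynomial.eval C),
    Polynomial.derivative_C_mul_X_pow, Polynomial.derivative_X_pow, hr, mul_assoc]

lemma coeff_zero_abelPS (n1 n2 n3 : ℕ) (A1 A2 A3 : Polynomial 𝕜) (r : ℕ) (C : 𝕜)
    (y : PowerSeries 𝕜) (h0 : constantCoeff y = C) :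
    PowerSeries.coeff 0 (abelPS n1 n2 n3 A1 A2 A3 r y) = (edgePoly n1 n2 n3 A1 A2 A3 r).eval C := by
  have hcc : ∀ (n : ℕ) (A : Polynomial 𝕜) (e : ℕ),
      PowerSeries.coeff 0 (PowerSeries.X ^ e * (A.reverse : PowerSeries 𝕜) * y ^ n)
        = if e = 0 then A.leadingCoeff * C ^ n else 0 := by
    intro n A e
    rw [mul_assoc, coeff_zero_Xpow_mul]
    rcases eq_or_ne e 0 with rfl | he
    · rw [if_pos rfl, if_pos rfl, map_mul, map_pow, h0, constantCoeff_reverse]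
    · rw [if_neg he, if_neg he]
  have hDc : PowerSeries.coeff 0 (PowerSeries.X ^ (((r : ℤ) + 1
        - Omin n1 n2 n3 A1.natDegree A2.natDegree A3.natDegree r).toNat)
        * ((r : PowerSeries 𝕜) * y + PowerSeries.X * derivativeFun y))
      = if (((r : ℤ) + 1
          - Omin n1 n2 n3 A1.natDegree A2.natDegree A3.natDegree r).toNat = 0) then
          (r : 𝕜) * C else 0 := by
    rw [coeff_zero_Xpow_mul]
    rcases eq_or_ne (((r : ℤ) + 1
        - Omin n1 n2 n3 A1.natDegree A2.natDegree A3.natDegree r).toNat) 0 with he | he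
    · rw [if_pos he, if_pos he, ← coeff_zero_eq_constantCoeff_apply, coeff_lin,
        coeff_zero_eq_constantCoeff_apply, h0]
      push_cast
      ring
    · rw [if_neg he, if_neg he]
  have hiff : ∀ ℓ, ((Phi n1 n2 n3 A1.natDegree A2.natDegree A3.natDegree r ℓ
      - Omin n1 n2 n3 A1.natDegree A2.natDegree A3.natDegree r).toNat = 0)
      ↔ ℓ ∈ Tie n1 n2 n3 A1.natDegree A2.natDegree A3.natDegree r :=
    toNat_eq_zero_iff_mem n1 n2 n3 A1.natDegree A2.natDegree A3.natDegree r
  have hDphi : Phi n1 n2 n3 A1.natDegree A2.natDegree A3.natDegree r AbelIdx.D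
      = (r : ℤ) + 1 := rfl
  simp only [abelPS, map_add]
  rw [hcc n1 A1 _, hcc n2 A2 _, hcc n3 A3 _, hDc, eval_edgePoly,
    if_congr (hiff AbelIdx.I1) rfl rfl, if_congr (hiff AbelIdx.I2) rfl rfl,
    if_congr (hiff AbelIdx.I3) rfl rfl,
    if_congr (hDphi ▸ hiff AbelIdx.D) rfl rfl]
  ring

lemma coeff_abelPS_sub (n1 n2 n3 : ℕ) (A1 A2 A3 : Polynomial 𝕜) (r : ℕ)
    (C : 𝕜) (m : ℕ) (y z : PowerSeries 𝕜)
    (h0y : constantCoeff y = C) (h0z : constantCoeff z = C)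
    (h : ∀ j < m, PowerSeries.coeff j y = PowerSeries.coeff j z) :
    PowerSeries.coeff m (abelPS n1 n2 n3 A1 A2 A3 r y)
        - PowerSeries.coeff m (abelPS n1 n2 n3 A1 A2 A3 r z)
      = ((Polynomial.derivative (edgePoly n1 n2 n3 A1 A2 A3 r)).eval C
          + (if AbelIdx.D ∈ Tie n1 n2 n3 A1.natDegree A2.natDegree A3.natDegree r
              then (m : 𝕜) else 0))
        * (PowerSeries.coeff m y - PowerSeries.coeff m z) := by
  have hiff : ∀ ℓ, ((Phi n1 n2 n3 A1.natDegree A2.natDegree A3.natDegree r ℓ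
      - Omin n1 n2 n3 A1.natDegree A2.natDegree A3.natDegree r).toNat = 0)
      ↔ ℓ ∈ Tie n1 n2 n3 A1.natDegree A2.natDegree A3.natDegree r :=
    toNat_eq_zero_iff_mem n1 n2 n3 A1.natDegree A2.natDegree A3.natDegree r
  have hDphi : Phi n1 n2 n3 A1.natDegree A2.natDegree A3.natDegree r AbelIdx.D
      = (r : ℤ) + 1 := rfl
  -- the three polynomial terms
  have hterm : ∀ (n : ℕ) (A : Polynomial 𝕜) (e : ℕ),
      PowerSeries.coeff m (PowerSeries.X ^ e * (A.reverse : PowerSeries 𝕜) * y ^ n)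
        - PowerSeries.coeff m (PowerSeries.X ^ e * (A.reverse : PowerSeries 𝕜) * z ^ n)
      = if e = 0 then
          A.leadingCoeff * ((n : 𝕜) * C ^ (n - 1)) * (PowerSeries.coeff m y - PowerSeries.coeff m z)
        else 0 := by
    intro n A e
    rw [mul_assoc, mul_assoc]
    have hpowlow := eqUpTo_pow h n
    have hlow : ∀ j < m, PowerSeries.coeff j ((A.reverse : PowerSeries 𝕜) * y ^ n)
        = PowerSeries.coeff j ((A.reverse : PowerSeries 𝕜) * z ^ n) :=
      eqUpTo_mul (fun j _ => rfl) hpowlow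
    rw [coeff_Xpow_mul_sub e m _ _ hlow]
    rcases eq_or_ne e 0 with rfl | he
    · rw [if_pos rfl, if_pos rfl, coeff_mul_sub _ _ _ m hpowlow,
        coeff_pow_sub y z C m n h0y h0z h, constantCoeff_reverse]
      ring
    · rw [if_neg he, if_neg he]
  -- the derivative term
  have hlinlow : ∀ j < m, PowerSeries.coeff j ((r : PowerSeries 𝕜) * y + PowerSeries.X * derivativeFun y)
      = PowerSeries.coeff j ((r : PowerSeries 𝕜) * z + PowerSeries.X * derivativeFun z) := by
    intro j hj; rw [coeff_lin, coeff_lin, h j hj]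
  have hD := coeff_Xpow_mul_sub
    (((r : ℤ) + 1 - Omin n1 n2 n3 A1.natDegree A2.natDegree A3.natDegree r).toNat) m _ _
    hlinlow
  rw [coeff_lin, coeff_lin] at hD
  -- assemble
  simp only [abelPS, map_add]
  rw [eval_derivative_edgePoly]
  have hgroup : ∀ aD a1 a2 a3 bD b1 b2 b3 : 𝕜,
      aD + a1 + a2 + a3 - (bD + b1 + b2 + b3)
        = (aD - bD) + ((a1 - b1) + ((a2 - b2) + (a3 - b3))) := by intros; ring
  rw [hgroup, hD, hterm n1 A1 _, hterm n2 A2 _, hterm n3 A3 _,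
    if_congr (hiff AbelIdx.I1) rfl rfl, if_congr (hiff AbelIdx.I2) rfl rfl,
    if_congr (hiff AbelIdx.I3) rfl rfl,
    if_congr (hDphi ▸ hiff AbelIdx.D) rfl rfl]
  split_ifs <;> ring

noncomputable def qseq (n1 n2 n3 : ℕ) (A1 A2 A3 : Polynomial 𝕜) (r : ℕ) (C : 𝕜)
    (L : ℕ → 𝕜) : ℕ → Polynomial 𝕜
  | 0 => Polynomial.C C
  | k + 1 => qseq n1 n2 n3 A1 A2 A3 r C L k
      + Polynomial.C (-(PowerSeries.coeff (k + 1) (abelPS n1 n2 n3 A1 A2 A3 r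
          ((qseq n1 n2 n3 A1 A2 A3 r C L k : Polynomial 𝕜) : PowerSeries 𝕜))) / L (k + 1))
      * Polynomial.X ^ (k + 1)

lemma qseq_zero (n1 n2 n3 : ℕ) (A1 A2 A3 : Polynomial 𝕜) (r : ℕ) (C : 𝕜) (L : ℕ → 𝕜) :
    qseq n1 n2 n3 A1 A2 A3 r C L 0 = Polynomial.C C := by
  rw [qseq]

lemma qseq_succ (n1 n2 n3 : ℕ) (A1 A2 A3 : Polynomial 𝕜) (r : ℕ) (C : 𝕜) (L : ℕ → 𝕜)
    (k : ℕ) :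
    qseq n1 n2 n3 A1 A2 A3 r C L (k + 1) = qseq n1 n2 n3 A1 A2 A3 r C L k
      + Polynomial.C (-(PowerSeries.coeff (k + 1) (abelPS n1 n2 n3 A1 A2 A3 r
          ((qseq n1 n2 n3 A1 A2 A3 r C L k : Polynomial 𝕜) : PowerSeries 𝕜))) / L (k + 1))
      * Polynomial.X ^ (k + 1) := by
  rw [qseq]

end Stmt4Aux2

set_option maxHeartbeats 1600000 in
/-- Theorem 3.6. Under the simplicity and nonresonance assumptions,
each nonzero root `C` of `P_r` gives a unique formal power series solution of `E_r`
with constant coefficient `C` (equivalently a unique formal Laurent solution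
`x(t) = Σ c_m t^{-r-m}` with `c_0 = C`). -/
theorem stmt4 {𝕜 : Type*} [RCLike 𝕜] (n1 n2 n3 : ℕ)
    (hn1 : 1 < n1) (hn12 : n1 < n2) (hn23 : n2 < n3)
    (A1 A2 A3 : Polynomial 𝕜) (hA1 : A1 ≠ 0) (hA2 : A2 ≠ 0) (hA3 : A3 ≠ 0)
    (r : ℕ) (hr : 1 ≤ r)
    (hadm : EdgeAdmissible n1 n2 n3 A1.natDegree A2.natDegree A3.natDegree r)
    (C : 𝕜) (hC : C ≠ 0) (hroot : (edgePoly n1 n2 n3 A1 A2 A3 r).eval C = 0)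
    (hnd1 : (Polynomial.derivative (edgePoly n1 n2 n3 A1 A2 A3 r)).eval C ≠ 0)
    (hnd2 : AbelIdx.D ∈ Tie n1 n2 n3 A1.natDegree A2.natDegree A3.natDegree r →
      ∀ m : ℕ, 1 ≤ m →
        (Polynomial.derivative (edgePoly n1 n2 n3 A1 A2 A3 r)).eval C + (m : 𝕜) ≠ 0) :
    ∃! y : PowerSeries 𝕜,
      PowerSeries.constantCoeff y = C ∧ abelPS n1 n2 n3 A1 A2 A3 r y = 0 := by
  classical
  let L : ℕ → 𝕜 := fun m =>
    (Polynomial.derivative (edgePoly n1 n2 n3 A1 A2 A3 r)).eval C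
      + (if AbelIdx.D ∈ Tie n1 n2 n3 A1.natDegree A2.natDegree A3.natDegree r
          then (m : 𝕜) else 0)
  have hLne : ∀ m, 1 ≤ m → L m ≠ 0 := by
    intro m hm
    show (Polynomial.derivative (edgePoly n1 n2 n3 A1 A2 A3 r)).eval C
      + (if AbelIdx.D ∈ Tie n1 n2 n3 A1.natDegree A2.natDegree A3.natDegree r
          then (m : 𝕜) else 0) ≠ 0
    by_cases hD : AbelIdx.D ∈ Tie n1 n2 n3 A1.natDegree A2.natDegree A3.natDegree r
    · rw [if_pos hD]; exact hnd2 hD m hm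
    · rw [if_neg hD, add_zero]; exact hnd1
  let q : ℕ → Polynomial 𝕜 := Stmt4Aux2.qseq n1 n2 n3 A1 A2 A3 r C L
  have hq0 : q 0 = Polynomial.C C := Stmt4Aux2.qseq_zero n1 n2 n3 A1 A2 A3 r C L
  have hqs : ∀ k, q (k + 1) = q k + Polynomial.C
      (-(PowerSeries.coeff (k + 1)
          (abelPS n1 n2 n3 A1 A2 A3 r ((q k : Polynomial 𝕜) : PowerSeries 𝕜))) / L (k + 1))
      * Polynomial.X ^ (k + 1) := Stmt4Aux2.qseq_succ n1 n2 n3 A1 A2 A3 r C L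
  have hhigh : ∀ k j, k < j → (q k).coeff j = 0 := by
    intro k
    induction k with
    | zero => intro j hj; rw [hq0, Polynomial.coeff_C, if_neg (by omega)]
    | succ k ih =>
      intro j hj
      rw [hqs k, Polynomial.coeff_add, Polynomial.coeff_C_mul, Polynomial.coeff_X_pow,
        if_neg (by omega), mul_zero, add_zero, ih j (by omega)]
  have hstep : ∀ k j, j ≤ k → (q (k + 1)).coeff j = (q k).coeff j := by
    intro k j hj
    rw [hqs k, Polynomial.coeff_add, Polynomial.coeff_C_mul, Polynomial.coeff_X_pow,
      if_neg (by omega), mul_zero, add_zero]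
  have hagree : ∀ k j, j ≤ k → (q k).coeff j = (q j).coeff j := by
    intro k
    induction k with
    | zero =>
      intro j hj
      obtain rfl := Nat.le_zero.mp hj
      rfl
    | succ k ih =>
      intro j hj
      rcases Nat.eq_or_lt_of_le hj with h' | h'
      · subst h'; rfl
      · have hjk : j ≤ k := by omega
        rw [hstep k j hjk, ih j hjk]
  let y : PowerSeries 𝕜 := PowerSeries.mk fun k => (q k).coeff k
  have hyc : ∀ k, PowerSeries.coeff k y = (q k).coeff k := fun k =>
    PowerSeries.coeff_mk _ _
  have h0y : PowerSeries.constantCoeff y = C := by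
    rw [← PowerSeries.coeff_zero_eq_constantCoeff_apply, hyc 0, hq0,
      Polynomial.coeff_C_zero]
  have hq0c : ∀ k, PowerSeries.constantCoeff ((q k : Polynomial 𝕜) : PowerSeries 𝕜) = C := by
    intro k
    rw [Polynomial.constantCoeff_coe, hagree k 0 (Nat.zero_le k), hq0,
      Polynomial.coeff_C_zero]
  have hlowyq : ∀ k j, j ≤ k →
      PowerSeries.coeff j y = PowerSeries.coeff j ((q k : Polynomial 𝕜) : PowerSeries 𝕜) := by
    intro k j hj
    rw [hyc j, Polynomial.coeff_coe, hagree k j hj]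
  have hsol : abelPS n1 n2 n3 A1 A2 A3 r y = 0 := by
    ext n
    rw [map_zero]
    cases n with
    | zero =>
      rw [Stmt4Aux2.coeff_zero_abelPS n1 n2 n3 A1 A2 A3 r C y h0y, hroot]
    | succ k =>
      have hd := Stmt4Aux2.coeff_abelPS_sub n1 n2 n3 A1 A2 A3 r C (k + 1) y
        ((q k : Polynomial 𝕜) : PowerSeries 𝕜) h0y (hq0c k)
        (fun j hj => hlowyq k j (by omega))
      have hz : PowerSeries.coeff (k + 1) ((q k : Polynomial 𝕜) : PowerSeries 𝕜) = 0 := by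
        rw [Polynomial.coeff_coe]; exact hhigh k (k + 1) (Nat.lt_succ_self k)
      set c := PowerSeries.coeff (k + 1)
        (abelPS n1 n2 n3 A1 A2 A3 r ((q k : Polynomial 𝕜) : PowerSeries 𝕜)) with hc
      have hyk : PowerSeries.coeff (k + 1) y = -c / L (k + 1) := by
        rw [hyc (k + 1), hqs k, Polynomial.coeff_add, Polynomial.coeff_C_mul,
          Polynomial.coeff_X_pow, if_pos rfl, mul_one,
          hhigh k (k + 1) (Nat.lt_succ_self k), zero_add]
      rw [hz, hyk, sub_zero] at hd
      have hfold : (Polynomial.derivative (edgePoly n1 n2 n3 A1 A2 A3 r)).eval C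
          + (if AbelIdx.D ∈ Tie n1 n2 n3 A1.natDegree A2.natDegree A3.natDegree r
              then ((k + 1 : ℕ) : 𝕜) else 0) = L (k + 1) := rfl
      rw [hfold] at hd
      have hcanc : L (k + 1) * (-c / L (k + 1)) = -c := by
        rw [mul_comm, div_mul_cancel₀ _ (hLne (k + 1) (by omega))]
      rw [hcanc] at hd
      rw [eq_add_of_sub_eq hd, neg_add_cancel]
  refine ⟨y, ⟨h0y, hsol⟩, ?_⟩
  rintro z ⟨hz0, hzsol⟩
  refine PowerSeries.ext fun m => ?_
  induction m using Nat.strong_induction_on with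
  | _ m ih =>
    rcases Nat.eq_zero_or_pos m with rfl | hm
    · rw [PowerSeries.coeff_zero_eq_constantCoeff_apply,
        PowerSeries.coeff_zero_eq_constantCoeff_apply, hz0, h0y]
    · have hd := Stmt4Aux2.coeff_abelPS_sub n1 n2 n3 A1 A2 A3 r C m z y hz0 h0y
        (fun j hj => ih j hj)
      rw [hzsol, hsol, map_zero, sub_self] at hd
      have hfold : (Polynomial.derivative (edgePoly n1 n2 n3 A1 A2 A3 r)).eval C
          + (if AbelIdx.D ∈ Tie n1 n2 n3 A1.natDegree A2.natDegree A3.natDegree r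
              then (m : 𝕜) else 0) = L m := rfl
      rw [hfold] at hd
      have hΔ := (mul_eq_zero.mp hd.symm).resolve_left (hLne m hm)
      exact sub_eq_zero.mp hΔ
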